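/- The measure with density 1/(x+y-xy)^2 on (0,1)×(0,1) is invariant under the natural extension of the Farey map F̄(x,y) = (x/(1-x), y/(1+y)) for x ∈ [0,1/2) and F̄(x,y) = ((1-x)/x, 1/(1+y)) for x ∈ [1/2,1). -/

import Mathlib

/-! Each branch of `fareyNatExt` is a product map `(x, y) ↦ (φ x, ψ y)` of Möbius maps, sending the
half-square `(0, 1/2) × (0, 1)`, resp. `(1/2, 1) × (0, 1)`, bijectively onto `(0, 1) × (0, 1/2)`,
resp. `(0, 1) × (1/2, 1)`. Its Jacobian is `((1 - x)(1 + y))⁻²`, resp. `(x (1 + y))⁻²`, while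
`x + y - x y` is divided by exactly `(1 - x)(1 + y)`, resp. `x (1 + y)`; so by the change of
variables formula each branch pushes the density measure on its half-square forward to the
density measure on its image. The two halves of the source and of the target both tile the unit
square up to a null segment. -/

open MeasureTheory

/-- The natural extension of the Farey map. -/
noncomputable def fareyNatExt (p : ℝ × ℝ) : ℝ × ℝ :=
  if p.1 < 1/2 then (p.1 / (1 - p.1), p.2 / (1 + p.2))
  else ((1 - p.1) / p.1, 1 / (1 + p.2))

/-- The measure with density 1/(x+y-xy)² on (0,1)×(0,1). -/
noncomputable def fareyMeasure : Measure (ℝ × ℝ) :=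
  ((volume : Measure (ℝ × ℝ)).restrict (Set.Ioo 0 1 ×ˢ Set.Ioo 0 1)).withDensity
    (fun p => ENNReal.ofReal (1 / (p.1 + p.2 - p.1 * p.2)^2))

open Set
open scoped ENNReal

theorem Ioo_ae_eq_Ioo_union_Ioo {α : Type*} [MeasurableSpace α] [LinearOrder α] {μ : Measure α}
    [NullSingletonClass μ] {a b c : α} (hab : a ≤ b) (hbc : b < c) :
    Ioo a c =ᵐ[μ] (Ioo a b ∪ Ioo b c : Set α) := by
  rw [← Ioc_union_Ioo_eq_Ioo hab hbc]
  exact ae_eq_set_union Ioo_ae_eq_Ioc.symm (ae_eq_refl _)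

theorem restrict_eq_add_of_ae_eq_union {α : Type*} [MeasurableSpace α] {μ ν : Measure α}
    (hν : ν ≪ μ) {s s₁ s₂ : Set α} (hs : s =ᵐ[μ] (s₁ ∪ s₂ : Set α)) (hd : Disjoint s₁ s₂)
    (hs₂ : MeasurableSet s₂) : ν.restrict s = ν.restrict s₁ + ν.restrict s₂ := by
  rw [Measure.restrict_congr_set (hν.ae_le hs), Measure.restrict_union hd hs₂]

theorem map_restrict_withDensity_of_abs_det_mul {E : Type*} [NormedAddCommGroup E]
    [NormedSpace ℝ E] [FiniteDimensional ℝ E] [MeasurableSpace E] [BorelSpace E]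
    (μ : Measure E) [μ.IsAddHaarMeasure] {ρ : E → ℝ≥0∞} {g : E → E} {g' : E → E →L[ℝ] E}
    {s : Set E} (hs : MeasurableSet s) (hg : Measurable g)
    (hg' : ∀ x ∈ s, HasFDerivWithinAt g (g' x) s x) (hinj : InjOn g s)
    (hρ : ∀ x ∈ s, ENNReal.ofReal |(g' x).det| * ρ (g x) = ρ x) :
    ((μ.withDensity ρ).restrict s).map g = (μ.withDensity ρ).restrict (g '' s) := by
  ext A hA
  have hgs : MeasurableSet (g '' s) := measurable_image_of_fderivWithin hs hg' hinj
  rw [Measure.map_apply hg hA, Measure.restrict_apply (hg hA), Measure.restrict_apply hA,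
    withDensity_apply _ (hA.inter hgs), withDensity_apply _ ((hg hA).inter hs),
    ← Measure.restrict_restrict hA, ← lintegral_indicator hA,
    lintegral_image_eq_lintegral_abs_det_fderiv_mul μ hs hg' hinj,
    ← Measure.restrict_restrict (hg hA), ← lintegral_indicator (hg hA)]
  refine setLIntegral_congr_fun hs fun x hx => ?_
  by_cases hxA : g x ∈ A
  · simp [hxA, hρ x hx]
  · simp [hxA]

theorem det_prodMap_toSpanSingleton (a b : ℝ) :
    ((ContinuousLinearMap.toSpanSingleton ℝ a).prodMap
      (ContinuousLinearMap.toSpanSingleton ℝ b)).det = a * b := by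
  rw [ContinuousLinearMap.det, ContinuousLinearMap.coe_prodMap, LinearMap.det_prodMap]
  simp

theorem map_prodMap_restrict_withDensity {ρ : ℝ × ℝ → ℝ≥0∞} {φ ψ φ' ψ' : ℝ → ℝ}
    {s s' t t' : Set ℝ} (hs : MeasurableSet s) (ht : MeasurableSet t)
    (hφ : Measurable φ) (hψ : Measurable ψ)
    (hφ' : ∀ x ∈ s, HasDerivAt φ (φ' x) x) (hψ' : ∀ y ∈ t, HasDerivAt ψ (ψ' y) y)
    (hφs : BijOn φ s s') (hψt : BijOn ψ t t')
    (hρ : ∀ x ∈ s, ∀ y ∈ t, ENNReal.ofReal |φ' x * ψ' y| * ρ (φ x, ψ y) = ρ (x, y)) :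
    ((volume.withDensity ρ).restrict (s ×ˢ t)).map (Prod.map φ ψ) =
      (volume.withDensity ρ).restrict (s' ×ˢ t') := by
  rw [← hφs.image_eq, ← hψt.image_eq, prod_image_image_eq]
  refine map_restrict_withDensity_of_abs_det_mul volume (hs.prod ht) (hφ.prodMap hψ)
    (fun p hp => ((hφ' p.1 hp.1).hasFDerivAt.prodMap p (hψ' p.2 hp.2).hasFDerivAt).hasFDerivWithinAt)
    (hφs.injOn.prodMap hψt.injOn) fun p hp => ?_
  rw [det_prodMap_toSpanSingleton]
  exact hρ p.1 hp.1 p.2 hp.2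

theorem hasDerivAt_div_one_sub {x : ℝ} (hx : x ≠ 1) :
    HasDerivAt (fun t => t / (1 - t)) (1 / (1 - x) ^ 2) x := by
  have h : 1 - x ≠ 0 := sub_ne_zero.2 hx.symm
  refine ((hasDerivAt_id' x).fun_div ((hasDerivAt_id' x).const_sub 1) h).congr_deriv ?_
  field_simp
  ring

theorem hasDerivAt_div_one_add {x : ℝ} (hx : x ≠ -1) :
    HasDerivAt (fun t => t / (1 + t)) (1 / (1 + x) ^ 2) x := by
  have h : 1 + x ≠ 0 := fun h => hx (by linarith)
  refine ((hasDerivAt_id' x).fun_div ((hasDerivAt_id' x).const_add 1) h).congr_deriv ?_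
  field_simp
  ring

theorem hasDerivAt_one_sub_div {x : ℝ} (hx : x ≠ 0) :
    HasDerivAt (fun t => (1 - t) / t) (-(1 / x ^ 2)) x := by
  refine (((hasDerivAt_id' x).const_sub 1).fun_div (hasDerivAt_id' x) hx).congr_deriv ?_
  field_simp
  ring

theorem hasDerivAt_one_div_one_add {x : ℝ} (hx : x ≠ -1) :
    HasDerivAt (fun t => 1 / (1 + t)) (-(1 / (1 + x) ^ 2)) x := by
  have h : 1 + x ≠ 0 := fun h => hx (by linarith)
  refine ((hasDerivAt_const x (1 : ℝ)).fun_div ((hasDerivAt_id' x).const_add 1) h).congr_deriv ?_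
  field_simp
  ring

theorem invOn_div_one_add :
    InvOn (fun x : ℝ => x / (1 + x)) (fun x => x / (1 - x)) (Ioo 0 (1 / 2)) (Ioo 0 1) := by
  constructor
  · rintro x ⟨-, hx⟩
    have : 1 - x ≠ 0 := by linarith
    field_simp
    ring
  · rintro x ⟨hx, -⟩
    have : 1 + x ≠ 0 := by linarith
    field_simp
    ring

theorem invOn_one_div_one_add :
    InvOn (fun x : ℝ => 1 / (1 + x)) (fun x => (1 - x) / x) (Ioo (1 / 2) 1) (Ioo 0 1) := by
  constructor
  · rintro x ⟨hx, -⟩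
    have : x ≠ 0 := by linarith
    field_simp
    ring
  · rintro x ⟨hx, -⟩
    have : 1 + x ≠ 0 := by linarith
    field_simp
    ring

theorem bijOn_div_one_add : BijOn (fun x : ℝ => x / (1 + x)) (Ioo 0 1) (Ioo 0 (1 / 2)) := by
  refine invOn_div_one_add.symm.bijOn (fun x ⟨h0, h1⟩ => ⟨by positivity, ?_⟩)
    (fun x ⟨h0, h1⟩ => ⟨div_pos h0 (by linarith), ?_⟩)
  · rw [div_lt_iff₀ (by positivity)]; linarith
  · rw [div_lt_one (by linarith)]; linarith

theorem bijOn_one_div_one_add : BijOn (fun x : ℝ => 1 / (1 + x)) (Ioo 0 1) (Ioo (1 / 2) 1) := by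
  refine invOn_one_div_one_add.symm.bijOn (fun x ⟨h0, h1⟩ => ⟨?_, ?_⟩)
    (fun x ⟨h0, h1⟩ => ⟨div_pos (by linarith) (by linarith), ?_⟩)
  · rw [lt_div_iff₀ (by positivity)]; linarith
  · rw [div_lt_one (by positivity)]; linarith
  · rw [div_lt_one (by linarith)]; linarith

noncomputable def fareyDensity (p : ℝ × ℝ) : ℝ≥0∞ :=
  ENNReal.ofReal (1 / (p.1 + p.2 - p.1 * p.2) ^ 2)

noncomputable def fareyLeft : ℝ × ℝ → ℝ × ℝ :=
  Prod.map (fun x => x / (1 - x)) (fun y => y / (1 + y))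

noncomputable def fareyRight : ℝ × ℝ → ℝ × ℝ :=
  Prod.map (fun x => (1 - x) / x) (fun y => 1 / (1 + y))

theorem fareyNatExt_eq_ite :
    fareyNatExt = fun p => if p.1 < 1 / 2 then fareyLeft p else fareyRight p := rfl

theorem measurable_fareyNatExt : Measurable fareyNatExt := by
  rw [fareyNatExt_eq_ite]
  exact Measurable.ite (measurableSet_lt measurable_fst measurable_const)
    (by unfold fareyLeft; fun_prop) (by unfold fareyRight; fun_prop)

theorem fareyMeasure_eq :
    fareyMeasure = (volume.withDensity fareyDensity).restrict (Ioo 0 1 ×ˢ Ioo 0 1) :=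
  (restrict_withDensity (measurableSet_Ioo.prod measurableSet_Ioo) _).symm

-- `x' + y' - x' y' = (x + y - x y) / ((1 - x)(1 + y))` for `(x', y') = fareyLeft (x, y)`
theorem fareyDensity_jacobian_left {x y : ℝ} (hx : x ≠ 1) (hy : y ≠ -1) :
    ENNReal.ofReal |1 / (1 - x) ^ 2 * (1 / (1 + y) ^ 2)| * fareyDensity (x / (1 - x), y / (1 + y))
      = fareyDensity (x, y) := by
  have hx' : 1 - x ≠ 0 := sub_ne_zero.2 hx.symm
  have hy' : 1 + y ≠ 0 := fun h => hy (by linarith)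
  rw [fareyDensity, fareyDensity, ← ENNReal.ofReal_mul (abs_nonneg _),
    abs_of_nonneg (by positivity)]
  congr 1
  field_simp
  ring_nf

-- `x' + y' - x' y' = (x + y - x y) / (x (1 + y))` for `(x', y') = fareyRight (x, y)`
theorem fareyDensity_jacobian_right {x y : ℝ} (hx : x ≠ 0) (hy : y ≠ -1) :
    ENNReal.ofReal |-(1 / x ^ 2) * -(1 / (1 + y) ^ 2)| * fareyDensity ((1 - x) / x, 1 / (1 + y))
      = fareyDensity (x, y) := by
  have hy' : 1 + y ≠ 0 := fun h => hy (by linarith)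
  rw [fareyDensity, fareyDensity, ← ENNReal.ofReal_mul (abs_nonneg _), neg_mul_neg,
    abs_of_nonneg (by positivity)]
  congr 1
  field_simp
  ring_nf

theorem map_fareyLeft :
    ((volume.withDensity fareyDensity).restrict (Ioo 0 (1 / 2) ×ˢ Ioo 0 1)).map fareyLeft =
      (volume.withDensity fareyDensity).restrict (Ioo 0 1 ×ˢ Ioo 0 (1 / 2)) :=
  map_prodMap_restrict_withDensity measurableSet_Ioo measurableSet_Ioo (by fun_prop) (by fun_prop)
    (fun x hx => hasDerivAt_div_one_sub (by linarith [hx.2]))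
    (fun y hy => hasDerivAt_div_one_add (by linarith [hy.1]))
    (bijOn_div_one_add.symm invOn_div_one_add) bijOn_div_one_add
    (fun x hx y hy => fareyDensity_jacobian_left (by linarith [hx.2]) (by linarith [hy.1]))

theorem map_fareyRight :
    ((volume.withDensity fareyDensity).restrict (Ioo (1 / 2) 1 ×ˢ Ioo 0 1)).map fareyRight =
      (volume.withDensity fareyDensity).restrict (Ioo 0 1 ×ˢ Ioo (1 / 2) 1) :=
  map_prodMap_restrict_withDensity measurableSet_Ioo measurableSet_Ioo (by fun_prop) (by fun_prop)
    (fun x hx => hasDerivAt_one_sub_div (by linarith [hx.1]))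
    (fun y hy => hasDerivAt_one_div_one_add (by linarith [hy.1]))
    (bijOn_one_div_one_add.symm invOn_one_div_one_add) bijOn_one_div_one_add
    (fun x hx y hy => fareyDensity_jacobian_right (by linarith [hx.1]) (by linarith [hy.1]))

theorem map_fareyNatExt_fareyMeasure : fareyMeasure.map fareyNatExt = fareyMeasure := by
  set ν := volume.withDensity fareyDensity
  have hν : ν ≪ volume := withDensity_absolutelyContinuous _ _
  have hsplit : Ioo (0 : ℝ) 1 =ᵐ[volume] (Ioo 0 (1 / 2) ∪ Ioo (1 / 2) 1 : Set ℝ) :=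
    Ioo_ae_eq_Ioo_union_Ioo (by norm_num) (by norm_num)
  have hdisj : Disjoint (Ioo (0 : ℝ) (1 / 2)) (Ioo (1 / 2) 1) :=
    disjoint_left.2 fun _ hx hx' => lt_asymm hx.2 hx'.1
  have hsource : fareyMeasure = ν.restrict (Ioo 0 (1 / 2) ×ˢ Ioo 0 1) +
      ν.restrict (Ioo (1 / 2) 1 ×ˢ Ioo 0 1) := by
    rw [fareyMeasure_eq, Measure.volume_eq_prod]
    refine restrict_eq_add_of_ae_eq_union hν ?_ (hdisj.set_prod_left _ _)
      (measurableSet_Ioo.prod measurableSet_Ioo)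
    rw [← union_prod]
    exact Measure.set_prod_ae_eq hsplit (ae_eq_refl _)
  have htarget : fareyMeasure = ν.restrict (Ioo 0 1 ×ˢ Ioo 0 (1 / 2)) +
      ν.restrict (Ioo 0 1 ×ˢ Ioo (1 / 2) 1) := by
    rw [fareyMeasure_eq, Measure.volume_eq_prod]
    refine restrict_eq_add_of_ae_eq_union hν ?_ (hdisj.set_prod_right _ _)
      (measurableSet_Ioo.prod measurableSet_Ioo)
    rw [← prod_union]
    exact Measure.set_prod_ae_eq (ae_eq_refl _) hsplit
  have hleft : (ν.restrict (Ioo 0 (1 / 2) ×ˢ Ioo 0 1)).map fareyNatExt =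
      (ν.restrict (Ioo 0 (1 / 2) ×ˢ Ioo 0 1)).map fareyLeft :=
    Measure.map_congr <| (ae_restrict_mem (measurableSet_Ioo.prod measurableSet_Ioo)).mono
      fun p hp => if_pos hp.1.2
  have hright : (ν.restrict (Ioo (1 / 2) 1 ×ˢ Ioo 0 1)).map fareyNatExt =
      (ν.restrict (Ioo (1 / 2) 1 ×ˢ Ioo 0 1)).map fareyRight :=
    Measure.map_congr <| (ae_restrict_mem (measurableSet_Ioo.prod measurableSet_Ioo)).mono
      fun p hp => if_neg hp.1.1.le.not_gt
  conv_lhs => rw [hsource]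
  rw [Measure.map_add _ _ measurable_fareyNatExt, hleft, hright, map_fareyLeft, map_fareyRight,
    htarget]

theorem fareyNatExt_invariant :
    ∀ A : Set (ℝ × ℝ), MeasurableSet A →
      fareyMeasure (fareyNatExt ⁻¹' A) = fareyMeasure A := by
  intro A hA
  rw [← Measure.map_apply measurable_fareyNatExt hA, map_fareyNatExt_fareyMeasure]
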